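/- Convergence of the iterated optimal stopping approximation: let c > 0 and let (u^n)_{n≥0} be the iterated optimal stopping sequence for switching cost c. Then ‖u^n‖ ≤ ‖F(0)‖/γ for all n ≥ 0, the sequence is componentwise nondecreasing (u^n ≤ u^{n+1} for all n), and u^n converges componentwise as n → ∞ to the solution u of the QVI with switching cost c. -/

import Mathlib

open Filter Topology

noncomputable section

/-- A monotone system with constant `γ`: whenever `u i l - v i l` is the (nonnegative)
maximum of all differences, `F u i l - F v i l ≥ γ (u i l - v i l)`. -/
def IsMonotoneSystem {N d : ℕ} (γ : ℝ)
    (F : (Fin d → Fin N → ℝ) → Fin d → Fin N → ℝ) : Prop :=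
  ∀ u v : Fin d → Fin N → ℝ, ∀ i : Fin d, ∀ l : Fin N,
    (∀ (j : Fin d) (k : Fin N), u j k - v j k ≤ u i l - v i l) →
    0 ≤ u i l - v i l →
    γ * (u i l - v i l) ≤ F u i l - F v i l

/-- The intervention operator `(M_i u)_l = max_{j ≠ i} (u j l - c)`. -/
def Mop {N d : ℕ} (c : ℝ) (u : Fin d → Fin N → ℝ) (i : Fin d) (l : Fin N) : ℝ :=
  ⨆ j : {j : Fin d // j ≠ i}, (u j l - c)

/-- The sup-norm `‖u‖ = max_{i,l} |u i l|`. -/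
def supNorm {N d : ℕ} (u : Fin d → Fin N → ℝ) : ℝ :=
  ⨆ p : Fin d × Fin N, |u p.1 p.2|

/-- A penalty function: continuous, non-decreasing, vanishing on `(-∞,0]` and
positive on `(0,∞)`. -/
def IsPenaltyFunction (π : ℝ → ℝ) : Prop :=
  Continuous π ∧ Monotone π ∧ (∀ y : ℝ, y ≤ 0 → π y = 0) ∧ (∀ y : ℝ, 0 < y → 0 < π y)

/-- A concave system: each `F_i` is concave (componentwise). -/
def IsConcaveSystem {N d : ℕ}
    (F : (Fin d → Fin N → ℝ) → Fin d → Fin N → ℝ) : Prop :=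
  ∀ (i : Fin d) (u v : Fin d → Fin N → ℝ) (θ : ℝ), 0 ≤ θ → θ ≤ 1 → ∀ l : Fin N,
    θ * F u i l + (1 - θ) * F v i l ≤ F (fun j k => θ * u j k + (1 - θ) * v j k) i l

/-!
Every estimate is a comparison argument. At a point where `a - b` attains a positive maximum,
monotonicity of the system forces `F a > F b`; so if at every point either `F a ≤ F b` or
`a ≤ b`, then `a ≤ b`. For an optimal stopping solution `a` one of `F a = 0`, `a = M v` holds
pointwise, which gives the bound by the constant `‖F 0‖ / γ` and the monotonicity of the
iterates by induction. The bounded nondecreasing sequence converges; by continuity of `F` and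
`M` its limit solves the QVI, whose solution is unique because `c > 0`.
-/

/-- `u` solves the optimal stopping problem with obstacle `M v`; the QVI is the case `v = u`. -/
def IsStoppingSolution {N d : ℕ} (F : (Fin d → Fin N → ℝ) → Fin d → Fin N → ℝ) (c : ℝ)
    (v u : Fin d → Fin N → ℝ) : Prop :=
  ∀ i l, min (F u i l) (u i l - Mop c v i l) = 0

theorem le_of_forall_isMax_sub {α β : Type*} [Finite α] [Finite β] {a b : α → β → ℝ}
    (h : ∀ i l, (∀ j k, a j k - b j k ≤ a i l - b i l) → a i l ≤ b i l) : a ≤ b := by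
  by_contra hab
  obtain ⟨i₀, l₀, hlt⟩ : ∃ i l, b i l < a i l := by simpa [Pi.le_def] using hab
  have : Nonempty (α × β) := ⟨(i₀, l₀)⟩
  obtain ⟨⟨i, l⟩, hp⟩ := Finite.exists_max fun p : α × β => a p.1 p.2 - b p.1 p.2
  linarith [h i l fun j k => hp (j, k), hp (i₀, l₀)]

section

variable {N d : ℕ}

theorem nonempty_ne_of_two_le (hd : 2 ≤ d) (i : Fin d) : Nonempty {j : Fin d // j ≠ i} := by
  have := Fin.nontrivial_iff_two_le.2 hd
  exact nonempty_subtype.2 (exists_ne i)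

theorem abs_le_supNorm (u : Fin d → Fin N → ℝ) (i : Fin d) (l : Fin N) : |u i l| ≤ supNorm u :=
  le_ciSup (f := fun p : Fin d × Fin N => |u p.1 p.2|) (Set.finite_range _).bddAbove (i, l)

theorem supNorm_nonneg (u : Fin d → Fin N → ℝ) : 0 ≤ supNorm u :=
  Real.iSup_nonneg fun _ => abs_nonneg _

theorem supNorm_le {u : Fin d → Fin N → ℝ} {t : ℝ} (h : ∀ i l, |u i l| ≤ t) (ht : 0 ≤ t) :
    supNorm u ≤ t :=
  Real.iSup_le (fun p => h p.1 p.2) ht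

theorem le_Mop (c : ℝ) (u : Fin d → Fin N → ℝ) {i j : Fin d} (hj : j ≠ i) (l : Fin N) :
    u j l - c ≤ Mop c u i l :=
  le_ciSup (f := fun j : {j : Fin d // j ≠ i} => u j l - c) (Set.finite_range _).bddAbove ⟨j, hj⟩

theorem Mop_le (hd : 2 ≤ d) (c : ℝ) (u : Fin d → Fin N → ℝ) (i : Fin d) (l : Fin N) {x : ℝ}
    (h : ∀ j, j ≠ i → u j l - c ≤ x) : Mop c u i l ≤ x := by
  have := nonempty_ne_of_two_le hd i
  exact ciSup_le fun j => h j.1 j.2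

theorem Mop_mono (c : ℝ) {u v : Fin d → Fin N → ℝ} (h : u ≤ v) (i : Fin d) (l : Fin N) :
    Mop c u i l ≤ Mop c v i l :=
  ciSup_mono (Set.finite_range _).bddAbove fun j => sub_le_sub_right (h j l) c

theorem exists_Mop_eq (hd : 2 ≤ d) (c : ℝ) (u : Fin d → Fin N → ℝ) (i : Fin d) (l : Fin N) :
    ∃ j, j ≠ i ∧ Mop c u i l = u j l - c := by
  have := nonempty_ne_of_two_le hd i
  obtain ⟨j, hj⟩ := exists_eq_ciSup_of_finite (f := fun j : {j : Fin d // j ≠ i} => u j l - c)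
  exact ⟨j.1, j.2, hj.symm⟩

theorem continuous_Mop (hd : 2 ≤ d) (c : ℝ) (i : Fin d) (l : Fin N) :
    Continuous fun u : Fin d → Fin N → ℝ => Mop c u i l := by
  have := nonempty_ne_of_two_le hd i
  simp only [Mop, ← Finset.sup'_univ_eq_ciSup]
  exact Continuous.finset_sup'_apply _ fun j _ => by fun_prop

end

namespace IsMonotoneSystem

variable {N d : ℕ} {γ : ℝ} {F : (Fin d → Fin N → ℝ) → Fin d → Fin N → ℝ}
  {u v : Fin d → Fin N → ℝ}

theorem apply_lt_apply (hF : IsMonotoneSystem γ F) (hγ : 0 < γ) {i : Fin d} {l : Fin N}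
    (hmax : ∀ j k, u j k - v j k ≤ u i l - v i l) (hlt : v i l < u i l) :
    F v i l < F u i l := by
  have := hF u v i l hmax (sub_nonneg.2 hlt.le)
  nlinarith [mul_pos hγ (sub_pos.2 hlt)]

theorem le_of_forall_apply_le_or_le (hF : IsMonotoneSystem γ F) (hγ : 0 < γ)
    (h : ∀ i l, F u i l ≤ F v i l ∨ u i l ≤ v i l) : u ≤ v :=
  le_of_forall_isMax_sub fun i l hmax => by
    by_contra! hlt
    rcases h i l with hFle | hle
    · exact (hF.apply_lt_apply hγ hmax hlt).not_ge hFle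
    · exact hlt.not_ge hle

theorem le_of_apply_le (hF : IsMonotoneSystem γ F) (hγ : 0 < γ)
    (h : ∀ i l, F u i l ≤ F v i l) : u ≤ v :=
  hF.le_of_forall_apply_le_or_le hγ fun i l => Or.inl (h i l)

theorem apply_const_nonneg (hF : IsMonotoneSystem γ F) {t : ℝ} (ht : 0 ≤ t)
    (hFt : supNorm (F 0) ≤ γ * t) (i : Fin d) (l : Fin N) : 0 ≤ F (fun _ _ => t) i l := by
  have := hF (fun _ _ => t) 0 i l (fun _ _ => le_rfl) (by simpa using ht)
  have := neg_abs_le (F 0 i l)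
  have := abs_le_supNorm (F 0) i l
  simp only [Pi.zero_apply, sub_zero] at *
  linarith

theorem apply_neg_const_nonpos (hF : IsMonotoneSystem γ F) {t : ℝ} (ht : 0 ≤ t)
    (hFt : supNorm (F 0) ≤ γ * t) (i : Fin d) (l : Fin N) : F (fun _ _ => -t) i l ≤ 0 := by
  have := hF 0 (fun _ _ => -t) i l (fun _ _ => le_rfl) (by simpa using ht)
  have := le_abs_self (F 0 i l)
  have := abs_le_supNorm (F 0) i l
  simp only [Pi.zero_apply, zero_sub, neg_neg] at *
  linarith

end IsMonotoneSystem

namespace IsStoppingSolution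

variable {N d : ℕ} {γ c : ℝ} {F : (Fin d → Fin N → ℝ) → Fin d → Fin N → ℝ}
  {u v w : Fin d → Fin N → ℝ}

theorem apply_nonneg (h : IsStoppingSolution F c v u) (i : Fin d) (l : Fin N) :
    0 ≤ F u i l :=
  (h i l).symm ▸ min_le_left _ _

theorem Mop_le (h : IsStoppingSolution F c v u) (i : Fin d) (l : Fin N) :
    Mop c v i l ≤ u i l :=
  sub_nonneg.1 <| (h i l).symm ▸ min_le_right _ _

theorem apply_eq_zero_or_eq_Mop (h : IsStoppingSolution F c v u) (i : Fin d) (l : Fin N) :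
    F u i l = 0 ∨ u i l = Mop c v i l := by
  have hi := h i l
  rcases min_choice (F u i l) (u i l - Mop c v i l) with hmin | hmin <;> rw [hmin] at hi
  · exact Or.inl hi
  · exact Or.inr (sub_eq_zero.1 hi)

theorem le_of_supersolution (h : IsStoppingSolution F c v u) (hF : IsMonotoneSystem γ F)
    (hγ : 0 < γ) (hFw : ∀ i l, 0 ≤ F w i l) (hMw : ∀ i l, Mop c v i l ≤ w i l) : u ≤ w :=
  hF.le_of_forall_apply_le_or_le hγ fun i l =>
    (h.apply_eq_zero_or_eq_Mop i l).imp (fun hF0 => hF0.trans_le (hFw i l))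
      fun hM => hM.trans_le (hMw i l)

theorem of_tendsto (hd : 2 ≤ d) (hFc : Continuous F) {v u : ℕ → Fin d → Fin N → ℝ}
    {v₀ u₀ : Fin d → Fin N → ℝ} (hv : Tendsto v atTop (𝓝 v₀)) (hu : Tendsto u atTop (𝓝 u₀))
    (h : ∀ n, IsStoppingSolution F c (v n) (u n)) : IsStoppingSolution F c v₀ u₀ := by
  intro i l
  have hM := continuous_Mop hd c i l
  have hcont : Continuous fun p : (Fin d → Fin N → ℝ) × (Fin d → Fin N → ℝ) =>
      min (F p.2 i l) (p.2 i l - Mop c p.1 i l) := by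
    fun_prop
  have hlim := (hcont.tendsto (v₀, u₀)).comp (hv.prodMk_nhds hu)
  have hzero : ∀ n, min (F (u n) i l) (u n i l - Mop c (v n) i l) = 0 := fun n => h n i l
  simp only [Function.comp_def, hzero] at hlim
  exact (tendsto_const_nhds_iff.1 hlim).symm

theorem le_of_qvi (hd : 2 ≤ d) (hF : IsMonotoneSystem γ F) (hγ : 0 < γ) (hc : 0 < c)
    {a b : Fin d → Fin N → ℝ} (ha : IsStoppingSolution F c a a)
    (hb : IsStoppingSolution F c b b) : a ≤ b := by
  by_contra hab
  obtain ⟨i₀, l₀, hlt⟩ : ∃ i l, b i l < a i l := by simpa [Pi.le_def] using hab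
  have : Nonempty (Fin d × Fin N) := ⟨(i₀, l₀)⟩
  -- A maximiser of `a - b` at which `a` is largest cannot switch: switching raises `a` by `c`.
  obtain ⟨⟨i, l⟩, hp⟩ := Finite.exists_max fun p : Fin d × Fin N =>
    toLex (a p.1 p.2 - b p.1 p.2, a p.1 p.2)
  have hmax : ∀ j k, a j k - b j k ≤ a i l - b i l := fun j k => by
    rcases Prod.Lex.toLex_le_toLex.1 (hp (j, k)) with h | ⟨h, _⟩ <;> exact h.le
  have hpos : b i l < a i l := by linarith [hmax i₀ l₀]
  rcases ha.apply_eq_zero_or_eq_Mop i l with hF0 | hM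
  · exact (hF.apply_lt_apply hγ hmax hpos).not_ge (hF0 ▸ hb.apply_nonneg i l)
  · obtain ⟨j, hji, hj⟩ := exists_Mop_eq hd c a i l
    have hbj : b j l - c ≤ b i l := (le_Mop c b hji l).trans (hb.Mop_le i l)
    rcases Prod.Lex.toLex_le_toLex.1 (hp (j, l)) with h | ⟨_, h⟩ <;> linarith

end IsStoppingSolution

section Iteration

variable {N d : ℕ} {γ c : ℝ} {F : (Fin d → Fin N → ℝ) → Fin d → Fin N → ℝ}
  {U : ℕ → Fin d → Fin N → ℝ}

theorem iterate_le_const (hd : 2 ≤ d) (hF : IsMonotoneSystem γ F) (hγ : 0 < γ) (hc : 0 ≤ c)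
    (hU0 : ∀ i l, F (U 0) i l = 0) (hUn : ∀ n, IsStoppingSolution F c (U n) (U (n + 1)))
    {t : ℝ} (ht : ∀ i l, 0 ≤ F (fun _ _ => t) i l) : ∀ n, U n ≤ fun _ _ => t
  | 0 => hF.le_of_apply_le hγ fun i l => (hU0 i l).trans_le (ht i l)
  | n + 1 => (hUn n).le_of_supersolution hF hγ ht fun i l =>
      Mop_le hd c _ i l fun j _ => by
        linarith [iterate_le_const hd hF hγ hc hU0 hUn ht n j l]

theorem iterate_le_succ (hF : IsMonotoneSystem γ F) (hγ : 0 < γ)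
    (hU0 : ∀ i l, F (U 0) i l = 0) (hUn : ∀ n, IsStoppingSolution F c (U n) (U (n + 1))) :
    ∀ n, U n ≤ U (n + 1)
  | 0 => hF.le_of_apply_le hγ fun i l => (hU0 i l).trans_le ((hUn 0).apply_nonneg i l)
  | n + 1 => (hUn n).le_of_supersolution hF hγ (hUn (n + 1)).apply_nonneg fun i l =>
      (Mop_mono c (iterate_le_succ hF hγ hU0 hUn n) i l).trans ((hUn (n + 1)).Mop_le i l)

end Iteration

theorem iterated_optimal_stopping_convergence_general {N d : ℕ} (hd : 2 ≤ d)
    (γ : ℝ) (hγ : 0 < γ)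
    (F : (Fin d → Fin N → ℝ) → Fin d → Fin N → ℝ)
    (hFcont : Continuous F) (hFmono : IsMonotoneSystem γ F)
    (c : ℝ) (hc : 0 < c)
    (U : ℕ → Fin d → Fin N → ℝ)
    (hU0 : ∀ i l, F (U 0) i l = 0)
    (hUn : ∀ n : ℕ, ∀ i l, min (F (U (n + 1)) i l) (U (n + 1) i l - Mop c (U n) i l) = 0)
    (u : Fin d → Fin N → ℝ)
    (hu : ∀ i l, min (F u i l) (u i l - Mop c u i l) = 0) :
    (∀ n : ℕ, supNorm (U n) ≤ supNorm (F 0) / γ) ∧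
    (∀ n : ℕ, ∀ i l, U n i l ≤ U (n + 1) i l) ∧
    (∀ i l, Filter.Tendsto (fun n => U n i l) Filter.atTop (nhds (u i l))) := by
  set K := supNorm (F 0) / γ
  have hK : 0 ≤ K := div_nonneg (supNorm_nonneg _) hγ.le
  have hγK : supNorm (F 0) ≤ γ * K := (mul_div_cancel₀ _ hγ.ne').ge
  have hmono : Monotone U := monotone_nat_of_le_succ (iterate_le_succ hFmono hγ hU0 hUn)
  have hupper := iterate_le_const hd hFmono hγ hc.le hU0 hUn (hFmono.apply_const_nonneg hK hγK)
  have hlower : ∀ n, (fun _ _ => -K) ≤ U n := fun n =>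
    (hFmono.le_of_apply_le hγ fun i l =>
      (hFmono.apply_neg_const_nonpos hK hγK i l).trans (hU0 i l).ge).trans (hmono n.zero_le)
  have hlim := tendsto_atTop_ciSup hmono ⟨_, Set.forall_mem_range.2 hupper⟩
  have hsol : IsStoppingSolution F c (⨆ n, U n) (⨆ n, U n) :=
    .of_tendsto hd hFcont hlim (hlim.comp (tendsto_add_atTop_nat 1)) hUn
  have hu' : IsStoppingSolution F c u u := hu
  have hsup : ⨆ n, U n = u :=
    le_antisymm (hsol.le_of_qvi hd hFmono hγ hc hu') (hu'.le_of_qvi hd hFmono hγ hc hsol)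
  refine ⟨fun n => supNorm_le (fun i l => abs_le.2 ⟨hlower n i l, hupper n i l⟩) hK,
    fun n => hmono n.le_succ, fun i l => ?_⟩
  rw [← hsup]
  exact tendsto_pi_nhds.1 (tendsto_pi_nhds.1 hlim i) l

/-- Convergence of the iterated optimal stopping approximation: uniform bound,
monotonicity, and convergence to the QVI solution. -/
theorem iterated_optimal_stopping_convergence {N d : ℕ} (hN : 1 ≤ N) (hd : 2 ≤ d)
    (γ : ℝ) (hγ : 0 < γ)
    (F : (Fin d → Fin N → ℝ) → Fin d → Fin N → ℝ)
    (hFcont : Continuous F) (hFmono : IsMonotoneSystem γ F)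
    (c : ℝ) (hc : 0 < c)
    (U : ℕ → Fin d → Fin N → ℝ)
    (hU0 : ∀ i l, F (U 0) i l = 0)
    (hUn : ∀ n : ℕ, ∀ i l, min (F (U (n + 1)) i l) (U (n + 1) i l - Mop c (U n) i l) = 0)
    (u : Fin d → Fin N → ℝ)
    (hu : ∀ i l, min (F u i l) (u i l - Mop c u i l) = 0) :
    (∀ n : ℕ, supNorm (U n) ≤ supNorm (F 0) / γ) ∧
    (∀ n : ℕ, ∀ i l, U n i l ≤ U (n + 1) i l) ∧
    (∀ i l, Filter.Tendsto (fun n => U n i l) Filter.atTop (nhds (u i l))) :=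
  iterated_optimal_stopping_convergence_general hd γ hγ F hFcont hFmono c hc U hU0 hUn u hu
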